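/- If α, β ∈ X are convex, then α # β is convex. -/

import Mathlib

open scoped BigOperators

noncomputable section

attribute [local instance] Classical.propDecidable

/-- `I`: the set of dyadic rationals in `[0,1]`. -/
def dyadicI : Set ℚ := {t | 0 ≤ t ∧ t ≤ 1 ∧ ∃ i n : ℕ, t = (i : ℚ) / 2 ^ n}

/-- `X` is the ℚ-vector space of functions `I → ℚ`. -/
abbrev X : Type := dyadicI → ℚ

lemma dyadicI_mem {i n : ℕ} (h : i ≤ 2 ^ n) : (i : ℚ) / 2 ^ n ∈ dyadicI := by
  refine ⟨by positivity, ?_, i, n, rfl⟩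
  rw [div_le_one (by positivity)]
  exact_mod_cast h

lemma zero_mem_dyadicI : (0 : ℚ) ∈ dyadicI := by
  simpa using dyadicI_mem (i := 0) (n := 0) (by norm_num)

lemma one_mem_dyadicI : (1 : ℚ) ∈ dyadicI := by
  simpa using dyadicI_mem (i := 1) (n := 0) (by norm_num)

lemma half_mem_dyadicI : (1 / 2 : ℚ) ∈ dyadicI := by
  have := dyadicI_mem (i := 1) (n := 1) (by norm_num)
  norm_num at this ⊢
  exact this

/-- Evaluation of `α : X` at a rational, extended by `0` off `I`. -/
def evI (α : X) (t : ℚ) : ℚ := if h : t ∈ dyadicI then α ⟨t, h⟩ else 0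

/-- The map `T₀ : X → X`, `(T₀ α)(t) = α (t/2)`. -/
def T0 (α : X) : X := fun t => evI α (t.1 / 2)

/-- The map `T₁ : X → X`, `(T₁ α)(t) = α ((1+t)/2)`. -/
def T1 (α : X) : X := fun t => evI α ((1 + t.1) / 2)

/-- Auxiliary recursion (on the exponent of the denominator) defining `α # β`. -/
def hashAux : ℕ → X → X → ℚ → ℚ
  | 0, α, β, t =>
      if t = 0 then 0 else (evI α 1 - evI α 0) * (evI β 1 - evI β 0)
  | n + 1, α, β, t =>
      if t ≤ 1 / 2 then
        hashAux n (T0 α) (T0 β) (2 * t) + hashAux n (T1 α) (T1 β) (2 * t)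
      else
        hashAux n (T0 α) (T0 β) 1 + hashAux n (T1 α) (T1 β) 1 +
          hashAux n (T0 α) (T1 β) (2 * t - 1) + hashAux n (T1 α) (T0 β) (2 * t - 1)

/-- The product `α # β` on `X`. -/
def hash (α β : X) : X := fun t => hashAux (padicValNat 2 t.1.den) α β t.1

/-- The element `t ↦ t` of `X`. -/
def tId : X := fun t => t.1

/-- The element `ε : t ↦ t − t²` of `X`. -/
def epsX : X := fun t => t.1 - t.1 ^ 2

/-- The constant function `1` in `X`. -/
def oneX : X := fun _ => (1 : ℚ)

/-- Convexity: `2α(i/q) ≥ α((i−1)/q) + α((i+1)/q)` for all powers of two `q = 2^n`, `0 < i < q`. -/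
def ConvexX (α : X) : Prop :=
  ∀ n i : ℕ, 0 < i → i < 2 ^ n →
    evI α (((i : ℚ) - 1) / 2 ^ n) + evI α (((i : ℚ) + 1) / 2 ^ n)
      ≤ 2 * evI α ((i : ℚ) / 2 ^ n)

/-- `α` is Lipschitz with constant `m`. -/
def LipschitzQ (m : ℚ) (α : X) : Prop :=
  ∀ s t : dyadicI, |α s - α t| ≤ m * |s.1 - t.1|

/-- The point `2^{-n}` of `I`. -/
def invPow (n : ℕ) : dyadicI :=
  ⟨1 / 2 ^ n, by simpa using dyadicI_mem (i := 1) (n := n) Nat.one_le_two_pow⟩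

/-- `μ` is the Hilbert–Kunz multiplicity of `α`, i.e. `μ = lim 2^n α(2^{-n})`. -/
def IsHKmu (α : X) (μ : ℝ) : Prop :=
  Filter.Tendsto (fun n : ℕ => ((2 ^ n * α (invPow n) : ℚ) : ℝ)) Filter.atTop (nhds μ)

/-- The series `S_α = Σ α(2^{-n}) (2w)^n = Σ (2^n α(2^{-n})) w^n`. -/
def hkSeries (α : X) : PowerSeries ℚ := PowerSeries.mk fun n => 2 ^ n * α (invPow n)

/-- Auxiliary recursion defining the functions `φ_m`. -/
def phiAux : ℕ → ℕ → ℚ → ℚ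
  | 0, _, _ => 0
  | n + 1, m, t =>
      if t ≤ 1 / 2 then
        if m % 2 = 0 then (phiAux n (m + 1) (2 * t) + (8 * (m : ℚ) + 6) * t) / 8
        else (phiAux n (m - 1) (2 * t) + ((2 * t) - (2 * t) ^ 2) + (8 * (m : ℚ) + 6) * t) / 8
      else
        if m = 0 then (phiAux n 0 (2 * t - 1) + 6 * (1 - t)) / 8
        else if m % 2 = 0 then
          (phiAux n (m - 1) (2 * t - 1) + ((2 * t - 1) - (2 * t - 1) ^ 2)
            + (8 * (m : ℚ) + 6) * (1 - t)) / 8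
        else (phiAux n (m + 1) (2 * t - 1) + (8 * (m : ℚ) + 6) * (1 - t)) / 8

/-- The functions `φ_m ∈ X` of Definition 2.2. -/
def phiM (m : ℕ) : X := fun t => phiAux (padicValNat 2 t.1.den) m t.1

/-- `ℕ` with the Nim-sum (bitwise XOR) as its (commutative) monoid operation. -/
def NimNat : Type := ℕ

instance : CommMonoid NimNat where
  mul a b := Nat.xor a b
  one := (0 : ℕ)
  mul_assoc := Nat.xor_assoc
  mul_comm := Nat.xor_comm
  one_mul := Nat.zero_xor
  mul_one := Nat.xor_zero

/-- The ring `Γ`: free `ℤ`-module on `λ₀, λ₁, …` with `λᵢλⱼ = λ_{i XOR j}`. -/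
abbrev GammaZ : Type := MonoidAlgebra ℤ NimNat

/-- The ring `Γ_Q = Γ ⊗ ℚ`. -/
abbrev GammaQ : Type := MonoidAlgebra ℚ NimNat

/-- The basis element `λᵢ` of `Γ`. -/
def lamZ (i : ℕ) : GammaZ := MonoidAlgebra.single (show NimNat from i) 1

/-- The basis element `λᵢ` of `Γ_Q`. -/
def lamQ (i : ℕ) : GammaQ := MonoidAlgebra.single (show NimNat from i) 1

/-- `δ_r = λ₀ − λ₁ + ⋯ + (−1)^{r−1} λ_{r−1}` in `Γ`. -/
def deltaZ (r : ℕ) : GammaZ := ∑ i ∈ Finset.range r, ((-1 : ℤ) ^ i) • lamZ i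

/-- `δ_r` in `Γ_Q`. -/
def deltaQ (r : ℕ) : GammaQ := ∑ i ∈ Finset.range r, ((-1 : ℚ) ^ i) • lamQ i

/-- `L_n(α) = Σ_{i=0}^{2^n−1} (α((i+1)/2^n) − α(i/2^n)) (−1)^i λᵢ ∈ Γ_Q`. -/
def Ln (n : ℕ) (α : X) : GammaQ :=
  ∑ i ∈ Finset.range (2 ^ n),
    ((-1 : ℚ) ^ i * (evI α (((i : ℚ) + 1) / 2 ^ n) - evI α ((i : ℚ) / 2 ^ n))) • lamQ i

/-- The Hilbert–Kunz function `φ_f ∈ X` of a power series `f`: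
`φ_f(i/q) = q^{-r} · dim_F F[[u₁,…,u_r]]/(u₁^q,…,u_r^q,f^i)`. -/
def phiF {F : Type} [Field F] {σ : Type} (f : MvPowerSeries σ F) : X := fun t =>
  ((Module.finrank F
      (MvPowerSeries σ F ⧸ Ideal.span
        (Set.range (fun j : σ => (MvPowerSeries.X j : MvPowerSeries σ F) ^ t.1.den)
          ∪ {f ^ t.1.num.toNat}))) : ℚ)
    / (t.1.den : ℚ) ^ (Nat.card σ)

/-- The natural inclusion `F[[u_j : j ∈ σ]] → F[[u_j : j ∈ τ]]` along an injection `e : σ → τ`. -/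
def embPS {F : Type} [Field F] {σ τ : Type} (e : σ → τ) (f : MvPowerSeries σ F) :
    MvPowerSeries τ F := fun d =>
  if h : ∃ d' : σ →₀ ℕ, Finsupp.mapDomain e d' = d then
    MvPowerSeries.coeff h.choose f
  else 0



/-!
On the grid of mesh `2⁻ⁿ`, `α # β` is computed by the level-`n` recursion `hashAux n α β`, so
convexity can be proved level by level, by induction on `n`. On each half of `I` the recursion
writes `α # β` as a sum of products of the halves `T₀α, T₁α, T₀β, T₁β`, which are again convex.
The only new inequality sits at `t = 1/2`; there it says that the cross products `T₀α # T₁β` and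
`T₁α # T₀β` grow near `0` no faster than `T₀α # T₀β` and `T₁α # T₁β` near `1`. Since the slopes of
`T₁α` read backwards are dominated by those of `T₀α`, this is a rearrangement inequality, which
again follows by induction from `(a - a')(b - b') ≥ 0`.
-/

open Set

def OnGrid (n : ℕ) (t : ℚ) : Prop := 0 ≤ t ∧ t ≤ 1 ∧ ∃ j : ℤ, t * 2 ^ n = j

def ConvexOnGrid (n : ℕ) (f : ℚ → ℚ) : Prop :=
  ∀ i : ℕ, 0 < i → i < 2 ^ n →
    f (((i : ℚ) - 1) / 2 ^ n) + f (((i : ℚ) + 1) / 2 ^ n) ≤ 2 * f ((i : ℚ) / 2 ^ n)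

section Grid

variable {m n : ℕ} {t : ℚ} {f g : ℚ → ℚ}

lemma onGrid_div_pow {x : ℚ} (j : ℤ) (hj : x = j) (h0 : 0 ≤ x) (h1 : x ≤ 2 ^ n) :
    OnGrid n (x / 2 ^ n) :=
  ⟨by positivity, (div_le_one (by positivity)).2 h1, j, by rw [div_mul_cancel₀ _ (by positivity), hj]⟩

lemma onGrid_one (n : ℕ) : OnGrid n 1 :=
  ⟨zero_le_one, le_rfl, 2 ^ n, by push_cast; ring⟩

lemma OnGrid.mono (h : OnGrid m t) (hmn : m ≤ n) : OnGrid n t := by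
  obtain ⟨h0, h1, j, hj⟩ := h
  refine ⟨h0, h1, j * 2 ^ (n - m), ?_⟩
  rw [← Nat.add_sub_cancel' hmn, pow_add, Nat.add_sub_cancel_left]
  push_cast
  rw [← hj]
  ring

lemma OnGrid.two_mul (h : OnGrid (n + 1) t) (ht : t ≤ 1 / 2) : OnGrid n (2 * t) :=
  ⟨by linarith [h.1], by linarith, h.2.2.imp fun j hj => by rw [← hj]; ring⟩

lemma OnGrid.two_mul_sub_one (h : OnGrid (n + 1) t) (ht : 1 / 2 ≤ t) : OnGrid n (2 * t - 1) :=
  let ⟨_, h1, j, hj⟩ := h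
  ⟨by linarith, by linarith, j - 2 ^ n, by push_cast; rw [← hj]; ring⟩

lemma OnGrid.mem_dyadicI (h : OnGrid n t) : t ∈ dyadicI := by
  obtain ⟨h0, h1, j, hj⟩ := h
  have hj0 : 0 ≤ j := by exact_mod_cast hj ▸ (by positivity : (0 : ℚ) ≤ t * 2 ^ n)
  lift j to ℕ using hj0
  refine ⟨h0, h1, j, n, ?_⟩
  rw [eq_div_iff (by positivity), hj]
  rfl

lemma ConvexOnGrid.congr (hf : ConvexOnGrid n f) (h : ∀ t, OnGrid n t → f t = g t) :
    ConvexOnGrid n g := by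
  intro i hi0 hi
  have hi1 : (1 : ℚ) ≤ i := by exact_mod_cast hi0
  have hi2 : (i : ℚ) + 1 ≤ 2 ^ n := by exact_mod_cast hi
  rw [← h _ (onGrid_div_pow (i - 1) (by push_cast; ring) (by linarith) (by linarith)),
    ← h _ (onGrid_div_pow (i + 1) (by push_cast; ring) (by linarith) hi2),
    ← h _ (onGrid_div_pow i (by simp) (by linarith) (by linarith))]
  exact hf i hi0 hi

lemma ConvexOnGrid.add (hf : ConvexOnGrid n f) (hg : ConvexOnGrid n g) :
    ConvexOnGrid n (fun t => f t + g t) :=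
  fun i hi0 hi => by linarith [hf i hi0 hi, hg i hi0 hi]

lemma ConvexOnGrid.const_add (c : ℚ) (hf : ConvexOnGrid n f) :
    ConvexOnGrid n (fun t => c + f t) :=
  fun i hi0 hi => by linarith [hf i hi0 hi]

lemma one_add_div_two (n : ℕ) (x : ℚ) : (1 + x / 2 ^ n) / 2 = (2 ^ n + x) / 2 ^ (n + 1) := by
  field_simp
  ring

lemma ConvexOnGrid.comp_half (hf : ConvexOnGrid (n + 1) f) :
    ConvexOnGrid n (fun t => f (t / 2)) := by
  intro i hi0 hi
  simp only [div_div, ← pow_succ]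
  exact hf i hi0 (by rw [pow_succ]; omega)

lemma ConvexOnGrid.comp_one_add_half (hf : ConvexOnGrid (n + 1) f) :
    ConvexOnGrid n (fun t => f ((1 + t) / 2)) := by
  intro i hi0 hi
  have := hf (2 ^ n + i) (by omega) (by rw [pow_succ]; omega)
  push_cast at this
  simpa only [one_add_div_two, add_sub_assoc, add_assoc] using this

lemma ConvexOnGrid.of_halves (h0 : ConvexOnGrid n (fun t => f (t / 2)))
    (h1 : ConvexOnGrid n (fun t => f ((1 + t) / 2)))
    (hmid : f (1 / 2 - 1 / 2 ^ (n + 1)) + f (1 / 2 + 1 / 2 ^ (n + 1)) ≤ 2 * f (1 / 2)) :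
    ConvexOnGrid (n + 1) f := by
  intro i hi0 hi
  rcases lt_trichotomy i (2 ^ n) with hlt | rfl | hgt
  · simpa only [div_div, ← pow_succ] using h0 i hi0 hlt
  · convert hmid using 3 <;> push_cast <;> field_simp <;> ring
  · obtain ⟨j, rfl⟩ := Nat.exists_eq_add_of_lt hgt
    have := h1 (j + 1) (by omega) (by rw [pow_succ] at hi; omega)
    push_cast at this ⊢
    convert this using 3 <;> rw [one_add_div_two] <;> ring

lemma ConvexX.convexOnGrid {α : X} (hα : ConvexX α) (n : ℕ) : ConvexOnGrid n (evI α) :=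
  hα n

end Grid

section Recursion

variable {m n : ℕ} {t : ℚ}

lemma evI_T0 (α : X) (ht : t ∈ dyadicI) : evI (T0 α) t = evI α (t / 2) := by
  rw [evI, dif_pos ht]
  rfl

lemma evI_T1 (α : X) (ht : t ∈ dyadicI) : evI (T1 α) t = evI α ((1 + t) / 2) := by
  rw [evI, dif_pos ht]
  rfl

lemma hashAux_apply_zero (n : ℕ) (α β : X) : hashAux n α β 0 = 0 := by
  induction n generalizing α β with
  | zero => simp [hashAux]
  | succ n ih => norm_num [hashAux, ih]

lemma hashAux_succ_of_le_half (n : ℕ) (α β : X) (ht : t ≤ 1 / 2) :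
    hashAux (n + 1) α β t =
      hashAux n (T0 α) (T0 β) (2 * t) + hashAux n (T1 α) (T1 β) (2 * t) :=
  if_pos ht

lemma hashAux_succ_of_half_le (n : ℕ) (α β : X) (ht : 1 / 2 ≤ t) :
    hashAux (n + 1) α β t =
      hashAux n (T0 α) (T0 β) 1 + hashAux n (T1 α) (T1 β) 1 +
        hashAux n (T0 α) (T1 β) (2 * t - 1) + hashAux n (T1 α) (T0 β) (2 * t - 1) := by
  rcases ht.eq_or_lt with rfl | ht
  · rw [hashAux_succ_of_le_half n α β le_rfl]
    norm_num [hashAux_apply_zero]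
  · exact if_neg (not_le.2 ht)

lemma hashAux_apply_one (n : ℕ) (α β : X) :
    hashAux n α β 1 = (evI α 1 - evI α 0) * (evI β 1 - evI β 0) := by
  induction n generalizing α β with
  | zero => norm_num [hashAux]
  | succ n ih =>
    rw [hashAux_succ_of_half_le n α β (by norm_num), show (2 : ℚ) * 1 - 1 = 1 by norm_num, ih, ih, ih, ih]
    simp only [evI_T0 _ zero_mem_dyadicI, evI_T0 _ one_mem_dyadicI, evI_T1 _ zero_mem_dyadicI,
      evI_T1 _ one_mem_dyadicI]
    norm_num
    ring

lemma hashAux_succ_of_onGrid (α β : X) (h : OnGrid n t) :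
    hashAux (n + 1) α β t = hashAux n α β t := by
  induction n generalizing α β t with
  | zero =>
    obtain ⟨h0, h1, j, hj⟩ := h
    rw [pow_zero, mul_one] at hj
    subst hj
    obtain rfl | rfl : j = 0 ∨ j = 1 := by
      have : 0 ≤ j := by exact_mod_cast h0
      have : j ≤ 1 := by exact_mod_cast h1
      omega
    · simp only [Int.cast_zero, hashAux_apply_zero]
    · simp only [Int.cast_one, hashAux_apply_one]
  | succ n ih =>
    rcases le_total t (1 / 2) with ht | ht
    · rw [hashAux_succ_of_le_half _ α β ht, hashAux_succ_of_le_half _ α β ht,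
        ih _ _ (h.two_mul ht), ih _ _ (h.two_mul ht)]
    · rw [hashAux_succ_of_half_le _ α β ht, hashAux_succ_of_half_le _ α β ht,
        ih _ _ (onGrid_one n), ih _ _ (onGrid_one n), ih _ _ (h.two_mul_sub_one ht),
        ih _ _ (h.two_mul_sub_one ht)]

lemma hashAux_eq_of_onGrid (α β : X) (h : OnGrid m t) (hmn : m ≤ n) :
    hashAux n α β t = hashAux m α β t := by
  induction n, hmn using Nat.le_induction with
  | base => rfl
  | succ n hmn ih => rw [hashAux_succ_of_onGrid α β (h.mono hmn), ih]

lemma evI_hash_of_onGrid (α β : X) (h : OnGrid n t) : evI (hash α β) t = hashAux n α β t := by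
  rw [evI, dif_pos h.mem_dyadicI]
  obtain ⟨h0, h1, j, hj⟩ := h
  have hden : t.den ∣ 2 ^ n := by
    have := Rat.den_dvd j (2 ^ n)
    rw [Rat.divInt_eq_div, ← hj] at this
    push_cast at this
    rw [mul_div_cancel_right₀ _ (by positivity)] at this
    exact_mod_cast this
  obtain ⟨e, he, hde⟩ := (Nat.dvd_prime_pow Nat.prime_two).1 hden
  change hashAux (padicValNat 2 t.den) α β t = _
  rw [hde, padicValNat.prime_pow]
  refine (hashAux_eq_of_onGrid α β ⟨h0, h1, t.num, ?_⟩ he).symm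
  rw [← Rat.mul_den_eq_num, hde]
  push_cast
  rfl

end Recursion

section Slopes

variable {n : ℕ}

def gridDiff (n : ℕ) (f : ℚ → ℚ) (k : ℕ) : ℚ :=
  f (((k : ℚ) + 1) / 2 ^ n) - f ((k : ℚ) / 2 ^ n)

lemma ConvexOnGrid.antitoneOn_gridDiff {f : ℚ → ℚ} (hf : ConvexOnGrid n f) :
    AntitoneOn (gridDiff n f) (Iio (2 ^ n)) := by
  refine antitoneOn_of_succ_le ordConnected_Iio fun k _ _ hk => ?_
  rw [Order.succ_eq_add_one] at hk ⊢
  have := hf (k + 1) k.succ_pos hk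
  simp only [gridDiff]
  push_cast at this ⊢
  rw [add_sub_cancel_right] at this
  linarith

lemma gridDiff_T0 (α : X) {k : ℕ} (hk : k < 2 ^ n) :
    gridDiff n (evI (T0 α)) k = gridDiff (n + 1) (evI α) k := by
  have hk' : (k : ℚ) + 1 ≤ 2 ^ n := by exact_mod_cast hk
  rw [gridDiff, gridDiff,
    evI_T0 α (onGrid_div_pow (k + 1) (by push_cast; ring) (by positivity) hk').mem_dyadicI,
    evI_T0 α (onGrid_div_pow (n := n) k (by simp) (by positivity) (by linarith)).mem_dyadicI]
  simp only [div_div, ← pow_succ]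

lemma gridDiff_T1 (α : X) {k : ℕ} (hk : k < 2 ^ n) :
    gridDiff n (evI (T1 α)) k = gridDiff (n + 1) (evI α) (2 ^ n + k) := by
  have hk' : (k : ℚ) + 1 ≤ 2 ^ n := by exact_mod_cast hk
  rw [gridDiff, gridDiff,
    evI_T1 α (onGrid_div_pow (k + 1) (by push_cast; ring) (by positivity) hk').mem_dyadicI,
    evI_T1 α (onGrid_div_pow (n := n) k (by simp) (by positivity) (by linarith)).mem_dyadicI]
  simp only [one_add_div_two]
  push_cast
  ring_nf

/-- The slopes of `α'` read from right to left are bounded by those of `α`: the interval `j` is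
the mirror image of the interval `k` exactly when `j + k + 1 = 2 ^ n`. -/
def SlopeDominates (α α' : X) : Prop :=
  ∀ n j k : ℕ, j + k + 1 = 2 ^ n → gridDiff n (evI α') j ≤ gridDiff n (evI α) k

lemma SlopeDominates.T0_T1 {α α' : X} (h : SlopeDominates α α') :
    SlopeDominates (T0 α) (T1 α') := by
  intro n j k hjk
  rw [gridDiff_T1 α' (by omega), gridDiff_T0 α (by omega)]
  exact h (n + 1) _ _ (by rw [pow_succ]; omega)

lemma SlopeDominates.T1_T0 {α α' : X} (h : SlopeDominates α α') :
    SlopeDominates (T1 α) (T0 α') := by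
  intro n j k hjk
  rw [gridDiff_T0 α' (by omega), gridDiff_T1 α (by omega)]
  exact h (n + 1) _ _ (by rw [pow_succ]; omega)

lemma ConvexX.slopeDominates_T0_T1 {α : X} (hα : ConvexX α) : SlopeDominates (T0 α) (T1 α) := by
  intro n j k hjk
  rw [gridDiff_T1 α (by omega), gridDiff_T0 α (by omega)]
  exact (hα.convexOnGrid (n + 1)).antitoneOn_gridDiff (by rw [mem_Iio, pow_succ]; omega)
    (by rw [mem_Iio, pow_succ]; omega) (by omega)

end Slopes

lemma ConvexX.T0 {α : X} (hα : ConvexX α) : ConvexX (T0 α) := fun n =>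
  (hα.convexOnGrid (n + 1)).comp_half.congr fun _ ht => (evI_T0 α ht.mem_dyadicI).symm

lemma ConvexX.T1 {α : X} (hα : ConvexX α) : ConvexX (T1 α) := fun n =>
  (hα.convexOnGrid (n + 1)).comp_one_add_half.congr fun _ ht => (evI_T1 α ht.mem_dyadicI).symm

lemma hashAux_cross_le (n : ℕ) {α α' β β' : X} (hα : SlopeDominates α α')
    (hβ : SlopeDominates β β') :
    hashAux n α β' (1 / 2 ^ n) + hashAux n α' β (1 / 2 ^ n) ≤
      (hashAux n α β 1 - hashAux n α β (1 - 1 / 2 ^ n)) +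
        (hashAux n α' β' 1 - hashAux n α' β' (1 - 1 / 2 ^ n)) := by
  induction n generalizing α α' β β' with
  | zero =>
    have ha := hα 0 0 0 rfl
    have hb := hβ 0 0 0 rfl
    simp only [gridDiff, pow_zero, div_one, Nat.cast_zero, zero_add] at ha hb
    simp only [pow_zero, div_one, sub_self, hashAux_apply_one, hashAux_apply_zero]
    linarith [mul_nonneg (sub_nonneg.2 ha) (sub_nonneg.2 hb)]
  | succ n ih =>
    have h01 := ih hα.T0_T1 hβ.T1_T0
    have h10 := ih hα.T1_T0 hβ.T0_T1
    have hδ : (1 : ℚ) / 2 ^ (n + 1) ≤ 1 / 2 := by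
      gcongr
      exact le_self_pow₀ one_le_two n.succ_ne_zero
    rw [hashAux_succ_of_le_half n _ _ hδ, hashAux_succ_of_le_half n _ _ hδ,
      hashAux_succ_of_half_le n α β (by norm_num), hashAux_succ_of_half_le n α' β' (by norm_num),
      hashAux_succ_of_half_le n α β (by linarith), hashAux_succ_of_half_le n α' β' (by linarith),
      show (2 : ℚ) * (1 / 2 ^ (n + 1)) = 1 / 2 ^ n by ring,
      show (2 : ℚ) * 1 - 1 = 1 by ring,
      show (2 : ℚ) * (1 - 1 / 2 ^ (n + 1)) - 1 = 1 - 1 / 2 ^ n by ring]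
    linarith

lemma convexOnGrid_hashAux (n : ℕ) {α β : X} (hα : ConvexX α) (hβ : ConvexX β) :
    ConvexOnGrid n (hashAux n α β) := by
  induction n generalizing α β with
  | zero => intro i hi0 hi; omega
  | succ n ih =>
    refine ConvexOnGrid.of_halves ?_ ?_ ?_
    · refine ((ih hα.T0 hβ.T0).add (ih hα.T1 hβ.T1)).congr fun t ht => ?_
      rw [hashAux_succ_of_le_half n α β (by linarith [ht.2.1]), mul_div_cancel₀ t two_ne_zero]
    · refine (((ih hα.T0 hβ.T1).add (ih hα.T1 hβ.T0)).const_add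
        (hashAux n (T0 α) (T0 β) 1 + hashAux n (T1 α) (T1 β) 1)).congr fun t ht => ?_
      rw [hashAux_succ_of_half_le n α β (by linarith [ht.1]), mul_div_cancel₀ _ two_ne_zero,
        add_sub_cancel_left]
      ring
    · have hδ : (0 : ℚ) < 1 / 2 ^ (n + 1) := by positivity
      rw [hashAux_succ_of_le_half n α β (by linarith),
        hashAux_succ_of_le_half n α β le_rfl,
        hashAux_succ_of_half_le n α β (by linarith),
        show (2 : ℚ) * (1 / 2 - 1 / 2 ^ (n + 1)) = 1 - 1 / 2 ^ n by ring,
        show (2 : ℚ) * (1 / 2 + 1 / 2 ^ (n + 1)) - 1 = 1 / 2 ^ n by ring,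
        show (2 : ℚ) * (1 / 2) = 1 by norm_num]
      linarith [hashAux_cross_le n hα.slopeDominates_T0_T1 hβ.slopeDominates_T0_T1]

/-- Theorem 1.13: if `α` and `β` are convex, then so is `α # β`. -/
theorem statement7 (α β : X) (hα : ConvexX α) (hβ : ConvexX β) :
    ConvexX (hash α β) := fun n =>
  (convexOnGrid_hashAux n hα hβ).congr fun _ ht => (evI_hash_of_onGrid α β ht).symm

end
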